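/- arXiv:1712.00592 — 2 statements merged into one kernel-verified Lean document; each statement's English description precedes it below -/
import Mathlib

section
/- Let u : ℝ² → ℝ be radial, continuous, u ∈ L⁴(ℝ²), and let V₁(x) = h_u(|x|)²/|x|² for x ≠ 0, V₁(0) = 0. Then V₁ is differentiable at 0 with ∇V₁(0) = 0, and away from the origin ∂V₁/∂xᵢ (x) = (2xᵢ h_u(|x|)/|x|⁴)(|x|² u(x)² − h_u(|x|)) = O(|x|) as |x| → 0; hence V₁ ∈ C¹(ℝ²). -/
/-!
Substituting `τ = r²` gives `V₁(x) = φ(|x|²)` with `φ(t) = F(t)² / t` and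
`F(t) = ∫₀ᵗ f(√τ)² / 2 dτ`, where `F` is `C¹` with `F(0) = 0`. Hence `φ(t) = t · A(t)²` for the
continuous slope `A(t) = F(t) / t`, `A(0) = F'(0)`, so `φ` is `C¹` with `φ'(0) = F'(0)²`.
Since `|x|²` is smooth, `V₁` is `C¹` with `∇V₁(x) = 2 φ'(|x|²) x`, which vanishes linearly at `0`.
-/

open MeasureTheory Real Filter Asymptotics Topology

noncomputable abbrev R2 := EuclideanSpace ℝ (Fin 2)

lemma hasDerivAt_id_mul_of_continuousAt {k : ℝ → ℝ} (hk : ContinuousAt k 0) :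
    HasDerivAt (fun t => t * k t) (k 0) 0 := by
  rw [hasDerivAt_iff_tendsto_slope]
  refine (hk.mono_left nhdsWithin_le_nhds).congr' ?_
  filter_upwards [self_mem_nhdsWithin] with t ht
  rw [slope_def_field]
  field_simp [show t ≠ 0 from ht]
  simp

section SqDivSelf

variable {F g : ℝ → ℝ}

lemma dslope_zero_eq_div_of_ne (hF0 : F 0 = 0) {t : ℝ} (ht : t ≠ 0) : dslope F 0 t = F t / t := by
  rw [dslope_of_ne _ ht, slope_def_field, hF0, sub_zero, sub_zero]

lemma sq_div_self_eq_mul_dslope_sq (hF0 : F 0 = 0) (t : ℝ) :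
    F t ^ 2 / t = t * dslope F 0 t ^ 2 := by
  rcases eq_or_ne t 0 with rfl | ht
  · simp
  · rw [dslope_zero_eq_div_of_ne hF0 ht]
    field_simp

/-- `dslope F 0` is `t ↦ F t / t` extended by `g 0` at `0`. At `t = 0` the junk value
`F 0 ^ 2 / 0 = 0` is the continuous extension. -/
lemma hasDerivAt_sq_div_self (hF : ∀ t, HasDerivAt F (g t) t) (hF0 : F 0 = 0) (t : ℝ) :
    HasDerivAt (fun t => F t ^ 2 / t) (2 * dslope F 0 t * g t - dslope F 0 t ^ 2) t := by
  rcases eq_or_ne t 0 with rfl | ht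
  · have hA : ContinuousAt (fun t => dslope F 0 t ^ 2) 0 :=
      (continuousAt_dslope_same.2 (hF 0).differentiableAt).pow 2
    have hA0 : dslope F 0 0 = g 0 := by rw [dslope_same, (hF 0).deriv]
    convert hasDerivAt_id_mul_of_continuousAt hA using 1
    · exact funext (sq_div_self_eq_mul_dslope_sq hF0)
    · rw [hA0]; ring
  · refine (((hF t).pow 2).div (hasDerivAt_id t) ht).congr_deriv ?_
    simp only [dslope_zero_eq_div_of_ne hF0 ht, Pi.pow_apply, id]
    field_simp
    ring

lemma continuous_dslope_of_hasDerivAt (hF : ∀ t, HasDerivAt F (g t) t) :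
    Continuous (dslope F 0) := by
  have hd : Differentiable ℝ F := fun t => (hF t).differentiableAt
  rw [← continuousOn_univ, continuousOn_dslope Filter.univ_mem]
  exact ⟨hd.continuous.continuousOn, hd 0⟩

lemma contDiff_one_sq_div_self (hF : ∀ t, HasDerivAt F (g t) t) (hg : Continuous g)
    (hF0 : F 0 = 0) : ContDiff ℝ 1 (fun t => F t ^ 2 / t) := by
  have hA := continuous_dslope_of_hasDerivAt hF
  rw [contDiff_one_iff_deriv]
  refine ⟨fun t => (hasDerivAt_sq_div_self hF hF0 t).differentiableAt, ?_⟩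
  rw [funext fun t => (hasDerivAt_sq_div_self hF hF0 t).deriv]
  exact ((continuous_const.mul hA).mul hg).sub (hA.pow 2)

end SqDivSelf

section NormSq

variable {E : Type*} [NormedAddCommGroup E] [InnerProductSpace ℝ E] {φ φ' : ℝ → ℝ}

lemma hasFDerivAt_comp_norm_sq (hφ : ∀ t, HasDerivAt φ (φ' t) t) (x : E) :
    HasFDerivAt (fun x => φ (‖x‖ ^ 2)) (φ' (‖x‖ ^ 2) • (2 • innerSL ℝ x)) x :=
  (hφ _).comp_hasFDerivAt x (hasStrictFDerivAt_norm_sq x).hasFDerivAt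

lemma fderiv_comp_norm_sq_isBigO (hφ : ContDiff ℝ 1 φ) :
    (fun x => fderiv ℝ (fun x : E => φ (‖x‖ ^ 2)) x) =O[𝓝 0] (fun x => ‖x‖) := by
  obtain ⟨hd, hφ'⟩ := contDiff_one_iff_deriv.1 hφ
  have hbdd : (fun x : E => deriv φ (‖x‖ ^ 2)) =O[𝓝 0] (fun _ => (1 : ℝ)) :=
    (hφ'.tendsto 0 |>.comp
      ((continuous_norm.pow 2 : Continuous fun x : E => ‖x‖ ^ 2).tendsto' 0 0 (by simp)))
      |>.isBigO_one ℝ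
  have hlin : (fun x : E => 2 • innerSL ℝ x) =O[𝓝 0] (fun x => ‖x‖) :=
    .of_bound 2 <| .of_forall fun x =>
      (norm_nsmul_le ..).trans_eq (by simp [innerSL_apply_norm])
  refine (hbdd.smul hlin).congr' (.of_forall fun x => ?_) (.of_forall fun x => one_smul ..)
  exact ((hasFDerivAt_comp_norm_sq (fun t => (hd t).hasDerivAt) x).fderiv).symm

lemma fderiv_comp_norm_sq_apply_single {ι : Type*} [Fintype ι] [DecidableEq ι]
    (hφ : ∀ t, HasDerivAt φ (φ' t) t) (x : EuclideanSpace ℝ ι) (i : ι) :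
    fderiv ℝ (fun x => φ (‖x‖ ^ 2)) x (EuclideanSpace.single i 1) = φ' (‖x‖ ^ 2) * (2 * x i) := by
  simp [(hasFDerivAt_comp_norm_sq hφ x).fderiv, EuclideanSpace.inner_single_right]

end NormSq

section Radial

variable {f : ℝ → ℝ}

lemma continuous_comp_sqrt_of_radial {E : Type*} [NormedAddCommGroup E] [NormedSpace ℝ E]
    [Nontrivial E] {u : E → ℝ} (hrad : ∀ x, u x = f ‖x‖) (hcont : Continuous u) :
    Continuous fun τ => f √τ := by
  obtain ⟨v, hv⟩ := exists_norm_eq E zero_le_one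
  have : Continuous fun τ : ℝ => u (√τ • v) := hcont.comp (continuous_sqrt.smul continuous_const)
  convert this using 2 with τ
  rw [hrad, norm_smul, hv, mul_one, norm_of_nonneg (sqrt_nonneg τ)]

lemma integral_mul_sq_eq_integral_sqrt (hf : Continuous fun τ => f √τ) {s : ℝ} (hs : 0 ≤ s) :
    ∫ r in (0:ℝ)..s, r * f r ^ 2 = ∫ τ in (0:ℝ)..s ^ 2, f √τ ^ 2 / 2 := by
  have hsub := intervalIntegral.integral_comp_mul_deriv (a := 0) (b := s) (f := fun r => r ^ 2)
    (f' := fun r => 2 * r) (g := fun τ => f √τ ^ 2 / 2)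
    (fun r _ => by simpa using hasDerivAt_pow 2 r) (by fun_prop) ((hf.pow 2).div_const 2)
  rw [zero_pow two_ne_zero] at hsub
  rw [← hsub]
  refine intervalIntegral.integral_congr fun r hr => ?_
  rw [Set.uIcc_of_le hs] at hr
  simp only [Function.comp_apply, sqrt_sq hr.1]
  ring

end Radial

theorem stmt7_general (f : ℝ → ℝ) (u : R2 → ℝ) (hrad : ∀ x, u x = f ‖x‖)
    (hcont : Continuous u) :
    HasFDerivAt (fun x : R2 => (∫ r in (0:ℝ)..‖x‖, r * f r ^ 2) ^ 2 / ‖x‖ ^ 2)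
        (0 : R2 →L[ℝ] ℝ) 0 ∧
      (∀ x : R2, x ≠ 0 → ∀ i : Fin 2,
        fderiv ℝ (fun x : R2 => (∫ r in (0:ℝ)..‖x‖, r * f r ^ 2) ^ 2 / ‖x‖ ^ 2) x
            (EuclideanSpace.single i 1) =
          2 * x i * (∫ r in (0:ℝ)..‖x‖, r * f r ^ 2) / ‖x‖ ^ 4 *
            (‖x‖ ^ 2 * u x ^ 2 - ∫ r in (0:ℝ)..‖x‖, r * f r ^ 2)) ∧
      (fun x : R2 =>
          fderiv ℝ (fun x : R2 => (∫ r in (0:ℝ)..‖x‖, r * f r ^ 2) ^ 2 / ‖x‖ ^ 2) x)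
        =O[nhds (0 : R2)] (fun x : R2 => ‖x‖) ∧
      ContDiff ℝ 1 (fun x : R2 => (∫ r in (0:ℝ)..‖x‖, r * f r ^ 2) ^ 2 / ‖x‖ ^ 2) := by
  have hf := continuous_comp_sqrt_of_radial hrad hcont
  set g : ℝ → ℝ := fun τ => f √τ ^ 2 / 2
  have hg : Continuous g := (hf.pow 2).div_const 2
  set F : ℝ → ℝ := fun τ => ∫ σ in (0:ℝ)..τ, g σ
  have hF : ∀ t, HasDerivAt F (g t) t := fun t => (hg.integral_hasStrictDerivAt 0 t).hasDerivAt
  have hF0 : F 0 = 0 := intervalIntegral.integral_same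
  have hsub (x : R2) : ∫ r in (0:ℝ)..‖x‖, r * f r ^ 2 = F (‖x‖ ^ 2) :=
    integral_mul_sq_eq_integral_sqrt hf (norm_nonneg x)
  have hφ := hasDerivAt_sq_div_self hF hF0
  have hφ1 := contDiff_one_sq_div_self hF hg hF0
  simp only [hsub]
  refine ⟨?_, fun x hx i => ?_, ?_, ?_⟩
  · simpa using hasFDerivAt_comp_norm_sq hφ (0 : R2)
  · have ht : ‖x‖ ^ 2 ≠ 0 := by positivity
    rw [fderiv_comp_norm_sq_apply_single hφ, dslope_zero_eq_div_of_ne hF0 ht]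
    simp only [g, sqrt_sq (norm_nonneg x), hrad]
    field_simp
  · exact fderiv_comp_norm_sq_isBigO hφ1
  · exact hφ1.comp (contDiff_norm_sq ℝ)

/-- for radial continuous `u ∈ L⁴(ℝ²)`, the potential
`V₁(x) = h_u(|x|)²/|x|²` (equal to `0` at `x = 0`) is differentiable at the
origin with zero derivative, its partial derivatives away from the origin are
`∂ᵢV₁(x) = (2xᵢ h_u(|x|)/|x|⁴)(|x|² u(x)² − h_u(|x|))`, the derivative is
`O(|x|)` near the origin, and `V₁ ∈ C¹(ℝ²)`. -/
theorem stmt7 (f : ℝ → ℝ) (u : R2 → ℝ) (hrad : ∀ x, u x = f ‖x‖)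
    (hcont : Continuous u) (hL4 : Integrable (fun x => u x ^ 4)) :
    HasFDerivAt (fun x : R2 => (∫ r in (0:ℝ)..‖x‖, r * f r ^ 2) ^ 2 / ‖x‖ ^ 2)
        (0 : R2 →L[ℝ] ℝ) 0 ∧
      (∀ x : R2, x ≠ 0 → ∀ i : Fin 2,
        fderiv ℝ (fun x : R2 => (∫ r in (0:ℝ)..‖x‖, r * f r ^ 2) ^ 2 / ‖x‖ ^ 2) x
            (EuclideanSpace.single i 1) =
          2 * x i * (∫ r in (0:ℝ)..‖x‖, r * f r ^ 2) / ‖x‖ ^ 4 *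
            (‖x‖ ^ 2 * u x ^ 2 - ∫ r in (0:ℝ)..‖x‖, r * f r ^ 2)) ∧
      (fun x : R2 =>
          fderiv ℝ (fun x : R2 => (∫ r in (0:ℝ)..‖x‖, r * f r ^ 2) ^ 2 / ‖x‖ ^ 2) x)
        =O[nhds (0 : R2)] (fun x : R2 => ‖x‖) ∧
      ContDiff ℝ 1 (fun x : R2 => (∫ r in (0:ℝ)..‖x‖, r * f r ^ 2) ^ 2 / ‖x‖ ^ 2) :=
  stmt7_general f u hrad hcont
end

section
/- Let p > 5 and α satisfy α > 1 if p ≥ 7, and 1 < α < 2/(7−p) if 5 < p < 7. Let A, B, F > 0 and C, D, E ≥ 0, and define γ(t) = (t^{2α}/2)A + (t^{2α−2}/2)ωB + t^{4α} μC + (t^{6α−4}/2) qD + (t^{8α−4}/4) qμE − (t^{(p+1)α−2}/(p+1)) λF for t > 0, where ω, μ, q, λ > 0. Then γ has a unique critical point t₀ > 0 in (0,∞), γ is increasing on (0, t₀), decreasing on (t₀, ∞), and attains its maximum at t₀. -/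
open Real Set

/-- The fibering map `γ_u(t) = I(u_t)` written with abstract nonnegative
coefficients. -/
noncomputable def gammaMap (p α ω μ q lam A B Cc Dd Ee F : ℝ) : ℝ → ℝ := fun t =>
  t ^ (2 * α) / 2 * A + t ^ (2 * α - 2) / 2 * (ω * B) + t ^ (4 * α) * (μ * Cc) +
    t ^ (6 * α - 4) / 2 * (q * Dd) + t ^ (8 * α - 4) / 4 * (q * μ * Ee) -
    t ^ ((p + 1) * α - 2) / (p + 1) * (lam * F)

/-- Auxiliary function: `deriv γ t = t ^ (8α-5) * gAux ... t` for `t > 0`. -/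
noncomputable def gAux (p α ω μ q lam A B Cc Dd Ee F : ℝ) : ℝ → ℝ := fun t =>
  α * A * t ^ (4 - 6 * α) + (α - 1) * (ω * B) * t ^ (2 - 6 * α) +
    4 * α * (μ * Cc) * t ^ (4 - 4 * α) + (3 * α - 2) * (q * Dd) * t ^ (-(2 * α)) +
    (2 * α - 1) * (q * μ * Ee) -
    ((p + 1) * α - 2) / (p + 1) * (lam * F) * t ^ ((p - 7) * α + 2)

set_option maxHeartbeats 1000000 in
/-- for `p > 5` and admissible `α`, the fibering map `γ` has a
unique positive critical point `t₀`; it is increasing on `(0, t₀]`, decreasing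
on `[t₀, ∞)`, and attains its maximum on `(0,∞)` at `t₀`. -/
theorem stmt10 (p α ω μ q lam A B Cc Dd Ee F : ℝ)
    (hp : 5 < p) (hα : 1 < α) (hα2 : p < 7 → α < 2 / (7 - p))
    (hω : 0 < ω) (hμ : 0 < μ) (hq : 0 < q) (hlam : 0 < lam)
    (hA : 0 < A) (hB : 0 < B) (hF : 0 < F)
    (hC : 0 ≤ Cc) (hD : 0 ≤ Dd) (hE : 0 ≤ Ee) :
    ∃ t₀ : ℝ, 0 < t₀ ∧
      StrictMonoOn (gammaMap p α ω μ q lam A B Cc Dd Ee F) (Ioc 0 t₀) ∧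
      StrictAntiOn (gammaMap p α ω μ q lam A B Cc Dd Ee F) (Ici t₀) ∧
      (∀ t : ℝ, 0 < t →
        gammaMap p α ω μ q lam A B Cc Dd Ee F t ≤
          gammaMap p α ω μ q lam A B Cc Dd Ee F t₀) ∧
      (∀ t : ℝ, 0 < t →
        deriv (gammaMap p α ω μ q lam A B Cc Dd Ee F) t = 0 → t = t₀) := by
  set γ := gammaMap p α ω μ q lam A B Cc Dd Ee F with hγdef
  set g := gAux p α ω μ q lam A B Cc Dd Ee F with hgdef
  set K1 := α * A with hK1def
  set K2 := (α - 1) * (ω * B) with hK2def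
  set K3 := 4 * α * (μ * Cc) with hK3def
  set K4 := (3 * α - 2) * (q * Dd) with hK4def
  set K5 := (2 * α - 1) * (q * μ * Ee) with hK5def
  set K6 := ((p + 1) * α - 2) / (p + 1) * (lam * F) with hK6def
  set e := (p - 7) * α + 2 with hedef
  have hgeq : ∀ t : ℝ, g t = K1 * t ^ (4 - 6 * α) + K2 * t ^ (2 - 6 * α) +
      K3 * t ^ (4 - 4 * α) + K4 * t ^ (-(2 * α)) + K5 - K6 * t ^ e := fun t => rfl
  have hp1 : (0:ℝ) < p + 1 := by linarith
  have he : 0 < e := by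
    rcases le_or_gt 7 p with h | h
    · have : 0 ≤ (p - 7) * α := mul_nonneg (by linarith) (by linarith)
      simp only [hedef]; linarith
    · have h2 := hα2 h
      have h7 : (0:ℝ) < 7 - p := by linarith
      have := (lt_div_iff₀ h7).mp h2
      simp only [hedef]; nlinarith
  have hK1 : 0 < K1 := mul_pos (by linarith) hA
  have hK2 : 0 < K2 := mul_pos (by linarith) (mul_pos hω hB)
  have hK3 : 0 ≤ K3 := mul_nonneg (by linarith) (mul_nonneg hμ.le hC)
  have hK4 : 0 ≤ K4 := mul_nonneg (by linarith) (mul_nonneg hq.le hD)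
  have hK5 : 0 ≤ K5 := mul_nonneg (by linarith) (mul_nonneg (mul_pos hq hμ).le hE)
  have hK6 : 0 < K6 := by
    apply mul_pos _ (mul_pos hlam hF)
    apply div_pos _ hp1
    nlinarith
  -- g is strictly decreasing on (0, ∞)
  have hganti : StrictAntiOn g (Ioi 0) := by
    intro x hx y hy hxy
    rw [hgeq, hgeq]
    have hx' : (0:ℝ) < x := hx
    have h1 : y ^ (4 - 6 * α) < x ^ (4 - 6 * α) :=
      Real.rpow_lt_rpow_of_neg hx' hxy (by linarith)
    have h2 : y ^ (2 - 6 * α) ≤ x ^ (2 - 6 * α) :=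
      Real.rpow_le_rpow_of_nonpos hx' hxy.le (by linarith)
    have h3 : y ^ (4 - 4 * α) ≤ x ^ (4 - 4 * α) :=
      Real.rpow_le_rpow_of_nonpos hx' hxy.le (by linarith)
    have h4 : y ^ (-(2 * α)) ≤ x ^ (-(2 * α)) :=
      Real.rpow_le_rpow_of_nonpos hx' hxy.le (by linarith)
    have h6 : x ^ e < y ^ e := Real.rpow_lt_rpow hx'.le hxy he
    have := mul_lt_mul_of_pos_left h1 hK1
    have := mul_le_mul_of_nonneg_left h2 hK2.le
    have := mul_le_mul_of_nonneg_left h3 hK3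
    have := mul_le_mul_of_nonneg_left h4 hK4
    have := mul_lt_mul_of_pos_left h6 hK6
    linarith
  -- continuity of g on (0,∞)
  have hgcont : ContinuousOn g (Ioi 0) := by
    intro t ht
    have ht' : t ≠ 0 := ne_of_gt ht
    have hrc : ∀ c : ℝ, ContinuousAt (fun s : ℝ => s ^ c) t :=
      fun c => Real.continuousAt_rpow_const t c (Or.inl ht')
    apply ContinuousAt.continuousWithinAt
    simp only [hgdef, gAux]
    exact ((((((hrc (4 - 6 * α)).const_mul (α * A)).add
      ((hrc (2 - 6 * α)).const_mul ((α - 1) * (ω * B)))).add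
      ((hrc (4 - 4 * α)).const_mul (4 * α * (μ * Cc)))).add
      ((hrc (-(2 * α))).const_mul ((3 * α - 2) * (q * Dd)))).add continuousAt_const).sub
      ((hrc ((p - 7) * α + 2)).const_mul (((p + 1) * α - 2) / (p + 1) * (lam * F)))
  -- continuity of γ on (0,∞)
  have hγcont : ContinuousOn γ (Ioi 0) := by
    intro t ht
    have ht' : t ≠ 0 := ne_of_gt ht
    have hrc : ∀ c : ℝ, ContinuousAt (fun s : ℝ => s ^ c) t :=
      fun c => Real.continuousAt_rpow_const t c (Or.inl ht')
    apply ContinuousAt.continuousWithinAt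
    simp only [hγdef, gammaMap]
    exact (((((((hrc (2 * α)).div_const 2).mul_const A).add
      (((hrc (2 * α - 2)).div_const 2).mul_const (ω * B))).add
      ((hrc (4 * α)).mul_const (μ * Cc))).add
      (((hrc (6 * α - 4)).div_const 2).mul_const (q * Dd))).add
      (((hrc (8 * α - 4)).div_const 4).mul_const (q * μ * Ee))).sub
      (((hrc ((p + 1) * α - 2)).div_const (p + 1)).mul_const (lam * F))
  -- derivative of γ
  have hderiv : ∀ t : ℝ, 0 < t → HasDerivAt γ (t ^ (8 * α - 5) * g t) t := by
    intro t ht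
    have ht' : t ≠ 0 := ne_of_gt ht
    have hr : ∀ c : ℝ, HasDerivAt (fun s : ℝ => s ^ c) (c * t ^ (c - 1)) t :=
      fun c => Real.hasDerivAt_rpow_const (Or.inl ht')
    have H : HasDerivAt γ
        (2 * α * t ^ (2 * α - 1) / 2 * A + (2 * α - 2) * t ^ (2 * α - 2 - 1) / 2 * (ω * B) +
          4 * α * t ^ (4 * α - 1) * (μ * Cc) +
          (6 * α - 4) * t ^ (6 * α - 4 - 1) / 2 * (q * Dd) +
          (8 * α - 4) * t ^ (8 * α - 4 - 1) / 4 * (q * μ * Ee) -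
          ((p + 1) * α - 2) * t ^ ((p + 1) * α - 2 - 1) / (p + 1) * (lam * F)) t := by
      rw [hγdef]
      unfold gammaMap
      exact (((((((hr (2 * α)).div_const 2).mul_const A).add
        (((hr (2 * α - 2)).div_const 2).mul_const (ω * B))).add
        ((hr (4 * α)).mul_const (μ * Cc))).add
        (((hr (6 * α - 4)).div_const 2).mul_const (q * Dd))).add
        (((hr (8 * α - 4)).div_const 4).mul_const (q * μ * Ee))).sub
        (((hr ((p + 1) * α - 2)).div_const (p + 1)).mul_const (lam * F))
    convert H using 1
    rw [hgeq]
    have e1 : t ^ (2 * α - 1) = t ^ (8 * α - 5) * t ^ (4 - 6 * α) := by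
      rw [← Real.rpow_add ht]; congr 1; ring
    have e2 : t ^ (2 * α - 2 - 1) = t ^ (8 * α - 5) * t ^ (2 - 6 * α) := by
      rw [← Real.rpow_add ht]; congr 1; ring
    have e3 : t ^ (4 * α - 1) = t ^ (8 * α - 5) * t ^ (4 - 4 * α) := by
      rw [← Real.rpow_add ht]; congr 1; ring
    have e4 : t ^ (6 * α - 4 - 1) = t ^ (8 * α - 5) * t ^ (-(2 * α)) := by
      rw [← Real.rpow_add ht]; congr 1; ring
    have e5 : t ^ (8 * α - 4 - 1) = t ^ (8 * α - 5) := by congr 1; ring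
    have e6 : t ^ ((p + 1) * α - 2 - 1) = t ^ (8 * α - 5) * t ^ e := by
      rw [← Real.rpow_add ht]; congr 1; simp only [hedef]; ring
    rw [e1, e2, e3, e4, e5, e6]
    simp only [hK1def, hK2def, hK3def, hK4def, hK5def, hK6def]
    ring
  -- a point where g is positive
  obtain ⟨a, ha, hga⟩ : ∃ a : ℝ, 0 < a ∧ 0 < g a := by
    have htend : Filter.Tendsto (fun t : ℝ => t ^ (4 - 6 * α)) (nhdsWithin 0 (Ioi 0))
        Filter.atTop := by
      have h1 : Filter.Tendsto (fun x : ℝ => x ^ (6 * α - 4)) Filter.atTop Filter.atTop :=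
        tendsto_rpow_atTop (by linarith)
      refine (h1.comp tendsto_inv_nhdsGT_zero).congr' ?_
      filter_upwards [self_mem_nhdsWithin] with t ht
      have ht' : (0:ℝ) < t := ht
      simp only [Function.comp_apply]
      rw [Real.inv_rpow ht'.le, ← Real.rpow_neg ht'.le]
      congr 1; ring
    have hev1 : ∀ᶠ t in nhdsWithin 0 (Ioi 0), (K6 + 1) / K1 < t ^ (4 - 6 * α) :=
      htend.eventually_gt_atTop _
    have hev2 : ∀ᶠ t in nhdsWithin (0:ℝ) (Ioi 0), t ∈ Ioc (0:ℝ) 1 :=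
      Filter.eventually_of_mem (Ioc_mem_nhdsGT_of_mem ⟨le_refl 0, one_pos⟩) fun t ht => ht
    obtain ⟨a, ha1, ha2, ha3⟩ := (hev1.and hev2).exists
    refine ⟨a, ha2, ?_⟩
    rw [hgeq]
    have hb1 : K6 + 1 < K1 * a ^ (4 - 6 * α) := by
      have := mul_lt_mul_of_pos_left ha1 hK1
      rwa [mul_div_cancel₀ _ (ne_of_gt hK1)] at this
    have hb2 : a ^ e ≤ 1 := Real.rpow_le_one ha2.le ha3 he.le
    have hb3 : K6 * a ^ e ≤ K6 := by
      have := mul_le_mul_of_nonneg_left hb2 hK6.le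
      simpa using this
    have hn2 : 0 ≤ K2 * a ^ (2 - 6 * α) := mul_nonneg hK2.le (Real.rpow_nonneg ha2.le _)
    have hn3 : 0 ≤ K3 * a ^ (4 - 4 * α) := mul_nonneg hK3 (Real.rpow_nonneg ha2.le _)
    have hn4 : 0 ≤ K4 * a ^ (-(2 * α)) := mul_nonneg hK4 (Real.rpow_nonneg ha2.le _)
    linarith
  -- a point where g is negative
  obtain ⟨b, hb, hgb⟩ : ∃ b : ℝ, 0 < b ∧ g b < 0 := by
    have htend : Filter.Tendsto (fun t : ℝ => t ^ e) Filter.atTop Filter.atTop :=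
      tendsto_rpow_atTop he
    have hev1 : ∀ᶠ t in Filter.atTop, (K1 + K2 + K3 + K4 + K5 + 1) / K6 < t ^ e :=
      htend.eventually_gt_atTop _
    obtain ⟨b, hb1, hb2⟩ := (hev1.and (Filter.eventually_ge_atTop (1:ℝ))).exists
    have hb0 : (0:ℝ) < b := lt_of_lt_of_le one_pos hb2
    refine ⟨b, hb0, ?_⟩
    rw [hgeq]
    have hc1 : b ^ (4 - 6 * α) ≤ 1 :=
      Real.rpow_le_one_of_one_le_of_nonpos hb2 (by linarith)
    have hc2 : b ^ (2 - 6 * α) ≤ 1 :=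
      Real.rpow_le_one_of_one_le_of_nonpos hb2 (by linarith)
    have hc3 : b ^ (4 - 4 * α) ≤ 1 :=
      Real.rpow_le_one_of_one_le_of_nonpos hb2 (by linarith)
    have hc4 : b ^ (-(2 * α)) ≤ 1 :=
      Real.rpow_le_one_of_one_le_of_nonpos hb2 (by linarith)
    have hd1 : K1 * b ^ (4 - 6 * α) ≤ K1 := by
      have := mul_le_mul_of_nonneg_left hc1 hK1.le
      simpa using this
    have hd2 : K2 * b ^ (2 - 6 * α) ≤ K2 := by
      have := mul_le_mul_of_nonneg_left hc2 hK2.le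
      simpa using this
    have hd3 : K3 * b ^ (4 - 4 * α) ≤ K3 := by
      have := mul_le_mul_of_nonneg_left hc3 hK3
      simpa using this
    have hd4 : K4 * b ^ (-(2 * α)) ≤ K4 := by
      have := mul_le_mul_of_nonneg_left hc4 hK4
      simpa using this
    have hd6 : K1 + K2 + K3 + K4 + K5 + 1 < K6 * b ^ e := by
      have := mul_lt_mul_of_pos_left hb1 hK6
      rwa [mul_div_cancel₀ _ (ne_of_gt hK6)] at this
    linarith
  -- a < b
  have hab : a < b := by
    by_contra h
    push_neg at h
    rcases lt_or_eq_of_le h with h' | h'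
    · have := hganti (mem_Ioi.mpr hb) (mem_Ioi.mpr ha) h'
      linarith
    · rw [h'] at hgb; linarith
  -- intermediate value theorem gives the zero t₀
  have hsub : Icc a b ⊆ Ioi 0 := fun x hx => lt_of_lt_of_le ha hx.1
  have hivt := intermediate_value_Icc' hab.le (hgcont.mono hsub)
  obtain ⟨t₀, ht₀mem, hgt₀⟩ := hivt ⟨hgb.le, hga.le⟩
  have ht₀ : 0 < t₀ := lt_of_lt_of_le ha ht₀mem.1
  -- sign of g on the two sides
  have hsign_pos : ∀ x : ℝ, 0 < x → x < t₀ → 0 < g x := by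
    intro x hx hxt
    have := hganti (mem_Ioi.mpr hx) (mem_Ioi.mpr ht₀) hxt
    rw [hgt₀] at this; exact this
  have hsign_neg : ∀ x : ℝ, t₀ < x → g x < 0 := by
    intro x hxt
    have := hganti (mem_Ioi.mpr ht₀) (mem_Ioi.mpr (lt_trans ht₀ hxt)) hxt
    rw [hgt₀] at this; exact this
  have hderiv' : ∀ t : ℝ, 0 < t → deriv γ t = t ^ (8 * α - 5) * g t :=
    fun t ht => (hderiv t ht).deriv
  -- strict monotonicity
  have hmono : StrictMonoOn γ (Ioc 0 t₀) := by
    apply strictMonoOn_of_deriv_pos (convex_Ioc 0 t₀) (hγcont.mono Ioc_subset_Ioi_self)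
    intro x hx
    rw [interior_Ioc] at hx
    rw [hderiv' x hx.1]
    exact mul_pos (Real.rpow_pos_of_pos hx.1 _) (hsign_pos x hx.1 hx.2)
  have hanti : StrictAntiOn γ (Ici t₀) := by
    apply strictAntiOn_of_deriv_neg (convex_Ici t₀)
      (hγcont.mono fun x hx => lt_of_lt_of_le ht₀ hx)
    intro x hx
    rw [interior_Ici] at hx
    rw [hderiv' x (lt_trans ht₀ hx)]
    exact mul_neg_of_pos_of_neg (Real.rpow_pos_of_pos (lt_trans ht₀ hx) _) (hsign_neg x hx)
  refine ⟨t₀, ht₀, hmono, hanti, ?_, ?_⟩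
  · intro t ht
    rcases lt_trichotomy t t₀ with h | h | h
    · exact (hmono ⟨ht, h.le⟩ ⟨ht₀, le_refl t₀⟩ h).le
    · rw [h]
    · exact (hanti (self_mem_Ici) (mem_Ici.mpr h.le) h).le
  · intro t ht hdt
    rw [hderiv' t ht] at hdt
    have hg0 : g t = 0 := by
      rcases mul_eq_zero.mp hdt with h | h
      · exact absurd h (Real.rpow_pos_of_pos ht _).ne'
      · exact h
    exact hganti.injOn (mem_Ioi.mpr ht) (mem_Ioi.mpr ht₀) (hg0.trans hgt₀.symm)
end
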